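/- Let M be a complexity measure on Boolean functions and suppose there are a function h : [4,∞) → ℝ_{≥0}, a real x₀ ≥ 2^8 and a constant α > 0 such that: (i) h is non-decreasing on [x₀,∞); (ii) h(2^x) ≥ log₂ x for all real x ≥ log₂ x₀; (iii) h(2^(2^v)) + h(2^(2^v')) ≤ h(2^(2^(v+v'))) for all v, v' ∈ ℕ with 2^(2^v) ≥ x₀ and 2^(2^v') ≥ x₀; (iv) every Ne\v{c}iporuk function b for M satisfies b(m) ≤ α·h(m) for all m ∈ ℕ, m ≥ 4. Then for every family of Boolean functions F = {f_n}_{n∈ℕ} and every n ∈ ℕ with n ≥ log₂ x₀: NeciporukLB^M_F(n) ≤ α·(4 + h(⌊x₀⌋))·(n/log₂ n)·h(2^n). -/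
import Mathlib


def subfun {n : ℕ} (f : (Fin n → Bool) → Bool) (V : Finset (Fin n))
    (ρ : {i : Fin n // i ∉ V} → Bool) : ({i : Fin n // i ∈ V} → Bool) → Bool :=
  fun y => f fun i => if h : i ∈ V then y ⟨i, h⟩ else ρ ⟨i, h⟩

noncomputable def numSubfuns {n : ℕ} (f : (Fin n → Bool) → Bool) (V : Finset (Fin n)) : ℕ :=
  (Set.range (subfun f V)).ncard
def IsPartition {n p : ℕ} (V : Fin p → Finset (Fin n)) : Prop :=
  (∀ i, (V i).Nonempty) ∧ (∀ i j, i ≠ j → Disjoint (V i) (V j)) ∧ ∀ x : Fin n, ∃ i, x ∈ V i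
def IsNeciporuk (M : ∀ n : ℕ, ((Fin n → Bool) → Bool) → ℕ) (b : ℕ → ℕ) : Prop :=
  (∀ m m' : ℕ, 0 < m → m ≤ m' → b m ≤ b m') ∧
  ∀ (n p : ℕ) (f : (Fin n → Bool) → Bool) (V : Fin p → Finset (Fin n)),
    IsPartition V → (∑ i, b (numSubfuns f (V i))) ≤ M n f

lemma aux_pos {n : ℕ} (f : (Fin n → Bool) → Bool) (V : Finset (Fin n)) :
    1 ≤ numSubfuns f V := by
  have hne : (Set.range (subfun f V)).Nonempty :=
    ⟨_, Set.mem_range_self (fun _ => true)⟩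
  exact (Set.ncard_pos (Set.toFinite _)).mpr hne

lemma aux_le1 {n : ℕ} (f : (Fin n → Bool) → Bool) (V : Finset (Fin n)) :
    numSubfuns f V ≤ 2 ^ 2 ^ V.card := by
  classical
  have h1 : numSubfuns f V ≤ Nat.card (({i : Fin n // i ∈ V} → Bool) → Bool) := by
    rw [← Set.ncard_univ]
    exact Set.ncard_le_ncard (Set.subset_univ _) Set.finite_univ
  have h2 : Nat.card (({i : Fin n // i ∈ V} → Bool) → Bool) = 2 ^ 2 ^ V.card := by
    simp [Nat.card_eq_fintype_card, Fintype.card_fun, Fintype.card_coe]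
  omega

lemma aux_le2 {n : ℕ} (f : (Fin n → Bool) → Bool) (V : Finset (Fin n)) :
    numSubfuns f V ≤ 2 ^ n := by
  classical
  have h1 : numSubfuns f V ≤ Nat.card ({i : Fin n // i ∉ V} → Bool) := by
    unfold numSubfuns
    rw [← Set.image_univ, ← Set.ncard_univ]
    exact Set.ncard_image_le Set.finite_univ
  have h2 : Nat.card ({i : Fin n // i ∉ V} → Bool) =
      2 ^ Fintype.card {i : Fin n // i ∉ V} := by
    simp [Nat.card_eq_fintype_card, Fintype.card_fun]
  have h3 : Fintype.card {i : Fin n // i ∉ V} ≤ n := by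
    simpa using Fintype.card_subtype_le (fun i : Fin n => i ∉ V)
  have h4 := Nat.pow_le_pow_right (by norm_num : 1 ≤ 2) h3
  omega

lemma aux_sum_card {n p : ℕ} (V : Fin p → Finset (Fin n)) (hV : IsPartition V) :
    ∑ i, (V i).card ≤ n := by
  classical
  rw [← Finset.card_biUnion (fun i _ j _ hij => hV.2.1 i j hij)]
  calc (Finset.univ.biUnion V).card ≤ (Finset.univ : Finset (Fin n)).card :=
        Finset.card_le_card (Finset.subset_univ _)
    _ = n := by simp

set_option maxHeartbeats 2000000 in
theorem stmt14 (M : ∀ n : ℕ, ((Fin n → Bool) → Bool) → ℕ)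
    (h : ℝ → ℝ) (x₀ : ℝ) (hx₀ : (2:ℝ)^(8:ℕ) ≤ x₀)
    (α : ℝ) (hα : 0 < α)
    (hnonneg : ∀ x : ℝ, 4 ≤ x → 0 ≤ h x)
    (hmono : MonotoneOn h (Set.Ici x₀))
    (hii : ∀ x : ℝ, Real.logb 2 x₀ ≤ x → Real.logb 2 x ≤ h ((2:ℝ)^x))
    (hiii : ∀ v v' : ℕ, x₀ ≤ ((2^2^v : ℕ) : ℝ) → x₀ ≤ ((2^2^v' : ℕ) : ℝ) →
      h ((2^2^v : ℕ) : ℝ) + h ((2^2^v' : ℕ) : ℝ) ≤ h ((2^2^(v+v') : ℕ) : ℝ))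
    (hiv : ∀ b : ℕ → ℕ, IsNeciporuk M b → ∀ m : ℕ, 4 ≤ m → (b m : ℝ) ≤ α * h m)
    (F : ∀ n : ℕ, (Fin n → Bool) → Bool)
    (n : ℕ) (hn : Real.logb 2 x₀ ≤ (n : ℝ))
    (b : ℕ → ℕ) (hb : IsNeciporuk M b)
    (p : ℕ) (V : Fin p → Finset (Fin n)) (hV : IsPartition V) :
    ((∑ i, b (numSubfuns (F n) (V i)) : ℕ) : ℝ) ≤
      α * (4 + h (⌊x₀⌋₊ : ℝ)) * ((n : ℝ) / Real.logb 2 (n : ℝ)) * h ((2:ℝ)^(n : ℕ)) := by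
  classical
  -- basic numeric facts
  have hx256 : (256:ℝ) ≤ x₀ := by norm_num at hx₀; linarith
  have hx0pos : (0:ℝ) < x₀ := by linarith
  have h8 : (8:ℝ) ≤ Real.logb 2 x₀ := by
    rw [Real.le_logb_iff_rpow_le (by norm_num) hx0pos]
    rw [show ((8:ℝ)) = ((8:ℕ):ℝ) by norm_num, Real.rpow_natCast]
    exact hx₀
  have hn8R : (8:ℝ) ≤ (n:ℝ) := le_trans h8 hn
  have hn8 : 8 ≤ n := by exact_mod_cast hn8R
  have hnpos : (0:ℝ) < (n:ℝ) := by linarith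
  set L : ℝ := Real.logb 2 (n:ℝ) with hLdef
  have hL3 : (3:ℝ) ≤ L := by
    rw [hLdef, Real.le_logb_iff_rpow_le (by norm_num) hnpos]
    rw [show ((3:ℝ)) = ((3:ℕ):ℝ) by norm_num, Real.rpow_natCast]
    norm_num; linarith
  have hLpos : (0:ℝ) < L := by linarith
  set W : ℕ := Nat.log 2 n with hWdef
  have hW1 : 2 ^ W ≤ n := Nat.pow_log_le_self 2 (by omega)
  have hW2 : n < 2 ^ (W + 1) := Nat.lt_pow_succ_log_self (by norm_num) n
  have hLW : L ≤ (W:ℝ) + 1 := by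
    rw [hLdef, Real.logb_le_iff_le_rpow (by norm_num) hnpos]
    rw [show ((W:ℝ) + 1) = (((W + 1 : ℕ)):ℝ) by push_cast; ring, Real.rpow_natCast]
    exact_mod_cast hW2.le
  set Hn : ℝ := h ((2:ℝ)^(n:ℕ)) with hHndef
  have hHnL : L ≤ Hn := by
    have := hii (n:ℝ) hn
    rwa [Real.rpow_natCast] at this
  have hHnpos : (0:ℝ) < Hn := lt_of_lt_of_le hLpos hHnL
  set A : ℝ := h ((⌊x₀⌋₊ : ℕ) : ℝ) with hAdef
  have hfloor4 : 4 ≤ ⌊x₀⌋₊ := Nat.le_floor (by push_cast; linarith)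
  have hA : 0 ≤ A := hnonneg _ (by
    have : ((4:ℕ):ℝ) ≤ ((⌊x₀⌋₊ : ℕ):ℝ) := by exact_mod_cast hfloor4
    push_cast at this ⊢; linarith)
  have hcastn : ((2^n : ℕ):ℝ) = (2:ℝ)^(n:ℕ) := by push_cast; ring
  -- superadditivity iterated
  have gsup : ∀ v : ℕ, x₀ ≤ ((2^2^v : ℕ) : ℝ) → ∀ k : ℕ, 1 ≤ k →
      (k:ℝ) * h ((2^2^v : ℕ) : ℝ) ≤ h ((2^2^(k*v) : ℕ) : ℝ) := by
    intro v hv k hk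
    induction k with
    | zero => omega
    | succ k ih =>
      rcases Nat.lt_or_ge k 1 with h1 | h1
      · have hk0 : k = 0 := by omega
        subst hk0; norm_num
      · have ih' := ih h1
        have hkv : x₀ ≤ ((2^2^(k*v) : ℕ) : ℝ) := by
          refine le_trans hv ?_
          exact_mod_cast Nat.pow_le_pow_right (by norm_num)
            (Nat.pow_le_pow_right (by norm_num) (Nat.le_mul_of_pos_left v (by omega)))
        have hadd := hiii (k*v) v hkv hv
        have heq : (k+1)*v = k*v + v := by ring
        rw [heq, Nat.cast_add, Nat.cast_one]
        linarith
  have gmono : ∀ v v' : ℕ, v ≤ v' → x₀ ≤ ((2^2^v : ℕ) : ℝ) →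
      h ((2^2^v : ℕ) : ℝ) ≤ h ((2^2^v' : ℕ) : ℝ) := by
    intro v v' hvv hv
    have hle : ((2^2^v : ℕ) : ℝ) ≤ ((2^2^v' : ℕ) : ℝ) := by
      exact_mod_cast Nat.pow_le_pow_right (by norm_num)
        (Nat.pow_le_pow_right (by norm_num) hvv)
    exact hmono (Set.mem_Ici.mpr hv) (Set.mem_Ici.mpr (hv.trans hle)) hle
  set C : ℝ := α * A + α * Hn * (3 / L) + α * Hn * (1 / ((W:ℝ) + 1)) with hCdef
  have hterm2nn : 0 ≤ α * Hn * (3 / L) :=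
    mul_nonneg (mul_nonneg hα.le hHnpos.le) (by positivity)
  have hterm3nn : 0 ≤ α * Hn * (1 / ((W:ℝ) + 1)) :=
    mul_nonneg (mul_nonneg hα.le hHnpos.le) (by positivity)
  have key : ∀ i, (b (numSubfuns (F n) (V i)) : ℝ) ≤ C * ((V i).card : ℝ) := by
    intro i
    set r := numSubfuns (F n) (V i) with hrdef
    set m := (V i).card with hmdef
    have hm1 : 1 ≤ m := Finset.card_pos.mpr (hV.1 i)
    have hr1 : 1 ≤ r := aux_pos _ _
    have hrle1 : r ≤ 2^2^m := aux_le1 _ _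
    have hrle2 : r ≤ 2^n := aux_le2 _ _
    have hm1R : (1:ℝ) ≤ (m:ℝ) := by exact_mod_cast hm1
    have hCexp : C * (m:ℝ) = α * A * m + α * Hn * (3 / L) * m
        + α * Hn * (1 / ((W:ℝ) + 1)) * m := by rw [hCdef]; ring
    by_cases hcase : x₀ ≤ (r:ℝ)
    · by_cases hbig : m ≤ W
      · -- middle blocks
        have hv : x₀ ≤ ((2^2^m : ℕ):ℝ) := le_trans hcase (by exact_mod_cast hrle1)
        have hb1 : (b r : ℝ) ≤ α * h ((2^2^m : ℕ):ℝ) := by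
          have hmon : b r ≤ b (2^2^m) := hb.1 r _ hr1 hrle1
          have h4 : 4 ≤ 2^2^m := by
            calc 4 = 2^2^1 := by norm_num
              _ ≤ 2^2^m := Nat.pow_le_pow_right (by norm_num)
                    (Nat.pow_le_pow_right (by norm_num) hm1)
          calc (b r : ℝ) ≤ (b (2^2^m) : ℝ) := by exact_mod_cast hmon
            _ ≤ α * h ((2^2^m : ℕ):ℝ) := hiv b hb _ h4
        set k := W / m with hkdef
        have hk1 : 1 ≤ k := (Nat.one_le_div_iff (by omega)).mpr hbig
        have hkm : k * m ≤ W := Nat.div_mul_le_self W m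
        have hsup := gsup m hv k hk1
        have hvkm : x₀ ≤ ((2^2^(k*m) : ℕ):ℝ) := by
          refine le_trans hv ?_
          exact_mod_cast Nat.pow_le_pow_right (by norm_num)
            (Nat.pow_le_pow_right (by norm_num) (Nat.le_mul_of_pos_left m (by omega)))
        have hgW : h ((2^2^(k*m) : ℕ):ℝ) ≤ h ((2^2^W : ℕ):ℝ) := gmono _ _ hkm hvkm
        have hvW : x₀ ≤ ((2^2^W : ℕ):ℝ) := by
          refine le_trans hvkm ?_
          exact_mod_cast Nat.pow_le_pow_right (by norm_num)
            (Nat.pow_le_pow_right (by norm_num) hkm)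
        have hgWH : h ((2^2^W : ℕ):ℝ) ≤ Hn := by
          have hle : ((2^2^W : ℕ):ℝ) ≤ (2:ℝ)^(n:ℕ) := by
            rw [← hcastn]
            exact_mod_cast Nat.pow_le_pow_right (by norm_num) hW1
          exact hmono (Set.mem_Ici.mpr hvW) (Set.mem_Ici.mpr (hvW.trans hle)) hle
        have hkgm : (k:ℝ) * h ((2^2^m : ℕ):ℝ) ≤ Hn :=
          le_trans hsup (le_trans hgW hgWH)
        have hW2mk : W ≤ 2 * (m * k) := by
          have h1 : m * (W / m) + W % m = W := Nat.div_add_mod W m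
          rw [← hkdef] at h1
          have h2 : W % m < m := Nat.mod_lt _ (by omega)
          have h3 : m ≤ m * k := Nat.le_mul_of_pos_right m (by omega)
          omega
        have h32 : 2 * L ≤ 3 * (W:ℝ) := by linarith
        have hmkR : (W:ℝ) ≤ 2 * ((m:ℝ) * (k:ℝ)) := by exact_mod_cast hW2mk
        have hgm0 : 0 ≤ h ((2^2^m : ℕ):ℝ) := hnonneg _ (by linarith)
        have hgoal1 : L * h ((2^2^m : ℕ):ℝ) ≤ 3 * (m:ℝ) * Hn := by
          have t1 : L ≤ 3 * ((m:ℝ) * (k:ℝ)) := by linarith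
          calc L * h ((2^2^m : ℕ):ℝ) ≤ (3 * ((m:ℝ) * (k:ℝ))) * h ((2^2^m : ℕ):ℝ) :=
                mul_le_mul_of_nonneg_right t1 hgm0
            _ = 3 * (m:ℝ) * ((k:ℝ) * h ((2^2^m : ℕ):ℝ)) := by ring
            _ ≤ 3 * (m:ℝ) * Hn := by
                apply mul_le_mul_of_nonneg_left hkgm (by positivity)
        have hgle : h ((2^2^m : ℕ):ℝ) ≤ 3 * (m:ℝ) * Hn / L := by
          rw [le_div_iff₀ hLpos]
          linarith [hgoal1, mul_comm (h ((2^2^m : ℕ):ℝ)) L]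
        have hmain : (b r : ℝ) ≤ α * Hn * (3 / L) * m := by
          calc (b r : ℝ) ≤ α * h ((2^2^m : ℕ):ℝ) := hb1
            _ ≤ α * (3 * (m:ℝ) * Hn / L) := mul_le_mul_of_nonneg_left hgle hα.le
            _ = α * Hn * (3 / L) * m := by ring
        have ht1 : 0 ≤ α * A * (m:ℝ) := mul_nonneg (mul_nonneg hα.le hA) (by positivity)
        have ht3 : 0 ≤ α * Hn * (1 / ((W:ℝ) + 1)) * m := mul_nonneg hterm3nn (by positivity)
        rw [hCexp]; linarith [hmain, ht1, ht3]
      · -- big blocks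
        have hb1 : (b r : ℝ) ≤ α * Hn := by
          have hmon : b r ≤ b (2^n) := hb.1 r _ hr1 hrle2
          have h4 : 4 ≤ 2^n := by
            calc 4 = 2^2 := by norm_num
              _ ≤ 2^n := Nat.pow_le_pow_right (by norm_num) (by omega)
          have := hiv b hb (2^n) h4
          rw [hcastn] at this
          calc (b r : ℝ) ≤ (b (2^n) : ℝ) := by exact_mod_cast hmon
            _ ≤ α * Hn := this
        have hmW : (W:ℝ) + 1 ≤ (m:ℝ) := by exact_mod_cast (by omega : W + 1 ≤ m)
        have hmain : (b r : ℝ) ≤ α * Hn * (1 / ((W:ℝ) + 1)) * m := by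
          have hWp : (0:ℝ) < (W:ℝ) + 1 := by positivity
          have h1R : (1:ℝ) ≤ (m:ℝ) / ((W:ℝ) + 1) := by
            rw [le_div_iff₀ hWp]; linarith
          calc (b r : ℝ) ≤ α * Hn := hb1
            _ = (α * Hn) * 1 := by ring
            _ ≤ (α * Hn) * ((m:ℝ) / ((W:ℝ) + 1)) :=
                mul_le_mul_of_nonneg_left h1R (mul_nonneg hα.le hHnpos.le)
            _ = α * Hn * (1 / ((W:ℝ) + 1)) * m := by ring
        have ht1 : 0 ≤ α * A * (m:ℝ) := mul_nonneg (mul_nonneg hα.le hA) (by positivity)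
        have ht2 : 0 ≤ α * Hn * (3 / L) * m := mul_nonneg hterm2nn (by positivity)
        rw [hCexp]; linarith [hmain, ht1, ht2]
    · -- tiny blocks
      push_neg at hcase
      have hrfloor : r ≤ ⌊x₀⌋₊ := Nat.le_floor hcase.le
      have hb1 : (b r : ℝ) ≤ α * A := by
        have h1 : b r ≤ b ⌊x₀⌋₊ := hb.1 r _ hr1 hrfloor
        have h2 := hiv b hb ⌊x₀⌋₊ hfloor4
        calc (b r : ℝ) ≤ (b ⌊x₀⌋₊ : ℝ) := by exact_mod_cast h1
          _ ≤ α * A := h2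
      have hmain : (b r : ℝ) ≤ α * A * m := by
        calc (b r : ℝ) ≤ α * A := hb1
          _ = (α * A) * 1 := by ring
          _ ≤ (α * A) * m := mul_le_mul_of_nonneg_left hm1R (mul_nonneg hα.le hA)
          _ = α * A * m := by ring
      have ht2 : 0 ≤ α * Hn * (3 / L) * m := mul_nonneg hterm2nn (by positivity)
      have ht3 : 0 ≤ α * Hn * (1 / ((W:ℝ) + 1)) * m := mul_nonneg hterm3nn (by positivity)
      rw [hCexp]; linarith [hmain, ht2, ht3]
  -- sum up
  have hC0 : 0 ≤ C := by
    have : 0 ≤ α * A := mul_nonneg hα.le hA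
    rw [hCdef]; linarith
  have hsum : ((∑ i, b (numSubfuns (F n) (V i)) : ℕ) : ℝ) ≤ C * (n:ℝ) := by
    have h1 : ((∑ i, b (numSubfuns (F n) (V i)) : ℕ) : ℝ)
        ≤ ∑ i, C * ((V i).card : ℝ) := by
      push_cast
      exact Finset.sum_le_sum (fun i _ => key i)
    have h2 : ∑ i, C * ((V i).card : ℝ) = C * ((∑ i, (V i).card : ℕ) : ℝ) := by
      rw [← Finset.mul_sum]; push_cast; ring
    have h3 : ((∑ i, (V i).card : ℕ) : ℝ) ≤ (n:ℝ) := by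
      exact_mod_cast aux_sum_card V hV
    calc ((∑ i, b (numSubfuns (F n) (V i)) : ℕ) : ℝ) ≤ ∑ i, C * ((V i).card : ℝ) := h1
      _ = C * ((∑ i, (V i).card : ℕ) : ℝ) := h2
      _ ≤ C * (n:ℝ) := mul_le_mul_of_nonneg_left h3 hC0
  have hCfin : C ≤ α * (4 + A) * (Hn / L) := by
    have c1 : α * A ≤ α * A * (Hn / L) := by
      have h1 : (1:ℝ) ≤ Hn / L := (one_le_div hLpos).mpr hHnL
      nlinarith [mul_nonneg hα.le hA]
    have c2 : α * Hn * (1 / ((W:ℝ) + 1)) ≤ α * Hn * (1 / L) :=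
      mul_le_mul_of_nonneg_left (one_div_le_one_div_of_le hLpos hLW)
        (mul_nonneg hα.le hHnpos.le)
    have c3 : α * Hn * (3 / L) + α * Hn * (1 / L) = 4 * α * (Hn / L) := by ring
    have c4 : α * (4 + A) * (Hn / L) = 4 * α * (Hn / L) + α * A * (Hn / L) := by ring
    rw [hCdef]; linarith
  calc ((∑ i, b (numSubfuns (F n) (V i)) : ℕ) : ℝ) ≤ C * (n:ℝ) := hsum
    _ ≤ (α * (4 + A) * (Hn / L)) * (n:ℝ) := mul_le_mul_of_nonneg_right hCfin hnpos.le
    _ = α * (4 + A) * ((n:ℝ) / L) * Hn := by ring
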